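/- Let (α_n : n ≥ 0) be a sequence of bounded operators on 𝓗 and let λ ∈ ℝ be such that the limit C(λ) = lim_{n→∞} (1/‖α_n a_n^*‖)·sym([[α_n a_n^*, −(λ·Id − b_n) a_{n-1}^{-1} α_{n-1} a_n], [0, a_n^* a_{n-1}^{-1} α_{n-1} a_n]]) exists in the operator norm and is a strictly positive operator on 𝓗 ⊕ 𝓗. Then there exist an integer N and positive constants c₁, c₂ such that for every nonzero α ∈ 𝓗 ⊕ 𝓗, the generalised eigenvector u associated with λ with (u_0, u_1)ᵗ = α satisfies for every n ≥ N: c₁·‖α_n a_n^*‖·(‖u_n‖² + ‖u_{n+1}‖²) ≤ S_n(α, λ) ≤ c₂·‖α_n a_n^*‖·(‖u_n‖² + ‖u_{n+1}‖²). -/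

import Mathlib

open ContinuousLinearMap Filter
open scoped ENNReal NNReal
noncomputable section

variable {H : Type*} [NormedAddCommGroup H] [InnerProductSpace ℂ H] [CompleteSpace H]

/-- The Hilbert space direct sum `𝓗 ⊕ 𝓗`. -/
abbrev H2 (H : Type*) [NormedAddCommGroup H] [InnerProductSpace ℂ H] : Type _ :=
  WithLp 2 (H × H)

/-- The column vector `(x, y)ᵗ` as an element of `𝓗 ⊕ 𝓗`. -/
def pr (x y : H) : H2 H := (WithLp.equiv 2 (H × H)).symm (x, y)

/-- The block operator `[[A, B], [C, D]]` on `𝓗 ⊕ 𝓗`. -/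
def blk (A B C D : H →L[ℂ] H) : H2 H →L[ℂ] H2 H :=
  ((WithLp.prodContinuousLinearEquiv 2 ℂ H H).symm : (H × H) →L[ℂ] H2 H) ∘L
    ((A ∘L ContinuousLinearMap.fst ℂ H H + B ∘L ContinuousLinearMap.snd ℂ H H).prod
      (C ∘L ContinuousLinearMap.fst ℂ H H + D ∘L ContinuousLinearMap.snd ℂ H H)) ∘L
    ((WithLp.prodContinuousLinearEquiv 2 ℂ H H) : H2 H →L[ℂ] (H × H))

/-- The real part `sym X = (X + X^*)/2` of a bounded operator. -/
def sym {E : Type*} [NormedAddCommGroup E] [InnerProductSpace ℂ E] [CompleteSpace E]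
    (X : E →L[ℂ] E) : E →L[ℂ] E :=
  (2 : ℂ)⁻¹ • (X + ContinuousLinearMap.adjoint X)

/-- `X` is strictly positive: `⟨Xv, v⟩ ≥ c‖v‖²` for some `c > 0`. -/
def StrictlyPos {E : Type*} [NormedAddCommGroup E] [InnerProductSpace ℂ E] [CompleteSpace E]
    (X : E →L[ℂ] E) : Prop :=
  ∃ c > (0 : ℝ), ∀ v : E, c * ‖v‖ ^ 2 ≤ (inner ℂ (X v) v : ℂ).re

/-- `X'` is a two-sided bounded inverse of `X`. -/
def Inverts (X X' : H →L[ℂ] H) : Prop := X' ∘L X = 1 ∧ X ∘L X' = 1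

/-- The formal Jacobi matrix `𝒜`: `(𝒜u)₀ = b₀u₀ + a₀u₁`,
`(𝒜u)ₙ = aₙ₋₁^* uₙ₋₁ + bₙ uₙ + aₙ uₙ₊₁` for `n ≥ 1`. -/
def jacobiA (a b : ℕ → H →L[ℂ] H) (u : ℕ → H) : ℕ → H
  | 0 => b 0 (u 0) + a 0 (u 1)
  | n + 1 => adjoint (a n) (u n) + b (n + 1) (u (n + 1)) + a (n + 1) (u (n + 2))

/-- The generalised eigenvector recurrence
`aₙ₋₁^* uₙ₋₁ + bₙ uₙ + aₙ uₙ₊₁ = z uₙ` for all `n ≥ 1`. -/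
def GenEigRec (a b : ℕ → H →L[ℂ] H) (z : ℂ) (u : ℕ → H) : Prop :=
  ∀ n : ℕ, adjoint (a n) (u n) + b (n + 1) (u (n + 1)) + a (n + 1) (u (n + 2)) = z • u (n + 1)

/-- `u` is a generalised eigenvector associated with `z`. -/
def IsGenEig (a b : ℕ → H →L[ℂ] H) (z : ℂ) (u : ℕ → H) : Prop :=
  u ≠ 0 ∧ GenEigRec a b z u

/-- `u` belongs to `ℓ²(ℕ; 𝓗)`. -/
def MemL2 (u : ℕ → H) : Prop := Summable fun n => ‖u n‖ ^ 2

/-- The transfer matrix `Bₙ(z)`; here `a'` is the sequence of inverses `aₙ⁻¹`. -/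
def transfer (a a' b : ℕ → H →L[ℂ] H) (z : ℂ) (n : ℕ) : H2 H →L[ℂ] H2 H :=
  blk 0 1 (-(a' n ∘L adjoint (a (n - 1)))) (a' n ∘L (z • (1 : H →L[ℂ] H) - b n))

/-- `prodD B n k = B (n+k-1) ∘ ⋯ ∘ B n`. -/
def prodD (B : ℕ → (H2 H →L[ℂ] H2 H)) : ℕ → ℕ → (H2 H →L[ℂ] H2 H)
  | _, 0 => 1
  | n, k + 1 => B (n + k) ∘L prodD B n k

/-- `sym (diag(a_{n+N-1}, a_{n+N-1}^*) · E · Xₙ(z))` where `Xₙ(z) = B_{n+N-1}(z)⋯Bₙ(z)`. -/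
def turanOp (a a' b : ℕ → H →L[ℂ] H) (N : ℕ) (z : ℂ) (n : ℕ) : H2 H →L[ℂ] H2 H :=
  sym (blk (a (n + N - 1)) 0 0 (adjoint (a (n + N - 1))) ∘L blk 0 (-1) 1 0 ∘L
    prodD (transfer a a' b z) n N)

/-- The `N`-shifted Turán determinant `Sₙ(α, z)` of a generalised eigenvector `u`. -/
def turanS (a a' b : ℕ → H →L[ℂ] H) (N : ℕ) (z : ℂ) (u : ℕ → H) (n : ℕ) : ℝ :=
  (inner ℂ (turanOp a a' b N z n (pr (u (n - 1)) (u n))) (pr (u (n - 1)) (u n)) : ℂ).re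

/-- The family `{Q^z : z ∈ K}` is uniformly non-degenerated on `K`, where
`Qₙ^z(v) = ‖a_{n+N-1}‖⁻¹ ⟨sym(diag(a_{n+N-1}, a_{n+N-1}^*)·E·Xₙ(z)) v, v⟩`. -/
def UnifNonDeg (a a' b : ℕ → H →L[ℂ] H) (N : ℕ) (K : Set ℂ) : Prop :=
  ∃ c ≥ (1 : ℝ), ∃ M : ℕ, 1 ≤ M ∧ ∀ v : H2 H, ∀ z ∈ K, ∀ n : ℕ, M ≤ n →
    c⁻¹ * ‖v‖ ^ 2 ≤ |‖a (n + N - 1)‖⁻¹ * (inner ℂ (turanOp a a' b N z n v) v : ℂ).re| ∧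
    |‖a (n + N - 1)‖⁻¹ * (inner ℂ (turanOp a a' b N z n v) v : ℂ).re| ≤ c * ‖v‖ ^ 2

/-- The matrix `𝓑ᵢ(z) = [[0, Id], [−Rᵢ, z Tᵢ − Qᵢ]]`. -/
def calB (T Q R : ℕ → H →L[ℂ] H) (z : ℂ) (i : ℕ) : H2 H →L[ℂ] H2 H :=
  blk 0 1 (-(R i)) (z • T i - Q i)

/-- `ℱ(λ) = sym([[0, −C_{N-1}], [C_{N-1}^*, 0]] · 𝓑_{N-1}(λ)⋯𝓑₀(λ))` from Theorem B. -/
def calF (T Q R C : ℕ → H →L[ℂ] H) (N : ℕ) (lam : ℝ) : H2 H →L[ℂ] H2 H :=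
  sym (blk 0 (-(C (N - 1))) (adjoint (C (N - 1))) 0 ∘L prodD (calB T Q R (lam : ℂ)) 0 N)

/-- The quadratic-form operator of the commutator approach (`al` is the sequence `α`):
`sym [[α_{n-1} a_{n-1}^*, −α_{n-1}(λ − bₙ)], [0, αₙ aₙ^*]]`. -/
def commOp (a b al : ℕ → H →L[ℂ] H) (lam : ℝ) (n : ℕ) : H2 H →L[ℂ] H2 H :=
  sym (blk (al (n - 1) ∘L adjoint (a (n - 1)))
    (-(al (n - 1) ∘L ((lam : ℂ) • (1 : H →L[ℂ] H) - b n))) 0 (al n ∘L adjoint (a n)))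

/-- `Sₙ(α, λ)` of the commutator approach. -/
def commS (a b al : ℕ → H →L[ℂ] H) (lam : ℝ) (u : ℕ → H) (n : ℕ) : ℝ :=
  (inner ℂ (commOp a b al lam n (pr (u (n - 1)) (u n))) (pr (u (n - 1)) (u n)) : ℂ).re

/-- `sym [[αₙ aₙ^*, −(λ − bₙ) aₙ₋₁⁻¹ αₙ₋₁ aₙ], [0, aₙ^* aₙ₋₁⁻¹ αₙ₋₁ aₙ]]`;
its normalisation converges to `C(λ)`. -/
def climOp (a a' b al : ℕ → H →L[ℂ] H) (lam : ℝ) (n : ℕ) : H2 H →L[ℂ] H2 H :=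
  sym (blk (al n ∘L adjoint (a n))
    (-((((lam : ℂ) • (1 : H →L[ℂ] H) - b n)) ∘L a' (n - 1) ∘L al (n - 1) ∘L a n))
    0
    (adjoint (a n) ∘L a' (n - 1) ∘L al (n - 1) ∘L a n))

/-- Consecutive pairs `(uₙ, uₙ₊₁)` of the generalised eigenvector with initial data `α`. -/
def genPair (a a' b : ℕ → H →L[ℂ] H) (z : ℂ) (α : H2 H) : ℕ → H × H
  | 0 => (WithLp.equiv 2 (H × H)) α
  | n + 1 =>
      let p := genPair a a' b z α n
      (p.2, a' (n + 1) (z • p.2 - b (n + 1) p.2 - adjoint (a n) p.1))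

/-- The generalised eigenvector with initial data `(u₀, u₁)ᵗ = α`. -/
def genVec (a a' b : ℕ → H →L[ℂ] H) (z : ℂ) (α : H2 H) (n : ℕ) : H :=
  (genPair a a' b z α n).1

/-- Iterated logarithm `log^{(i)}`. -/
def iterLog : ℕ → ℝ → ℝ
  | 0, x => x
  | i + 1, x => Real.log (iterLog i x)

/-- `g_j(x) = ∏_{i=1}^j log^{(i)}(x)`. -/
def gfun (j : ℕ) (x : ℝ) : ℝ := ∏ i ∈ Finset.Icc 1 j, iterLog i x

/-!
For `n ≥ 1` the recurrence at `n` gives `u_{n-1} = (a_{n-1}⁻¹)^* ((λ - bₙ) uₙ - aₙ uₙ₊₁)`.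
Substituting this, and using that `λ - bₙ` is self-adjoint, turns `Sₙ(α, λ)` into the quadratic
form of `sym [[αₙ aₙ^*, -(λ - bₙ) aₙ₋₁⁻¹ αₙ₋₁ aₙ], [0, aₙ^* aₙ₋₁⁻¹ αₙ₋₁ aₙ]]` at `(uₙ, uₙ₊₁)`.
Divided by `‖αₙ aₙ^*‖` this operator is eventually within `c / 2` of `C(λ)`, where
`⟨C(λ) v, v⟩ ≥ c ‖v‖²`, so its form lies between `c / 2` and `‖C(λ)‖ + c / 2` times
`‖αₙ aₙ^*‖ (‖uₙ‖² + ‖uₙ₊₁‖²)`.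
-/

section QuadraticForm

variable {E : Type*} [NormedAddCommGroup E] [InnerProductSpace ℂ E]

theorem abs_re_inner_apply_self_le (X : E →L[ℂ] E) (v : E) :
    |(inner ℂ (X v) v : ℂ).re| ≤ ‖X‖ * ‖v‖ ^ 2 := by
  grw [Complex.abs_re_le_norm, norm_inner_le_norm, le_opNorm, mul_assoc, ← sq]

theorem re_inner_smul_apply_self (t : ℝ) (X : E →L[ℂ] E) (v : E) :
    (inner ℂ ((t • X) v) v : ℂ).re = t * (inner ℂ (X v) v : ℂ).re := by
  rw [smul_apply, ← algebraMap_smul ℂ t (X v), inner_smul_left]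
  simp [Complex.coe_algebraMap]

theorem re_inner_sym_apply_self [CompleteSpace E] (X : E →L[ℂ] E) (v : E) :
    (inner ℂ (sym X v) v : ℂ).re = (inner ℂ (X v) v : ℂ).re := by
  have hconj : (inner ℂ v (X v) : ℂ).re = (inner ℂ (X v) v : ℂ).re := by
    rw [← inner_conj_symm, Complex.conj_re]
  simp only [sym, smul_apply, add_apply, adjoint_inner_left, inner_smul_left, inner_add_left,
    map_inv₀, Complex.conj_ofNat, Complex.mul_re, Complex.add_re, hconj]
  norm_num
  ring

theorem re_inner_apply_self_bounds_of_norm_inv_smul_sub_lt {X C : E →L[ℂ] E} {c t : ℝ}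
    (hC : ∀ v, c * ‖v‖ ^ 2 ≤ (inner ℂ (C v) v : ℂ).re) (ht : 0 ≤ t)
    (hX : ‖t⁻¹ • X - C‖ < c / 2) (v : E) :
    c / 2 * (t * ‖v‖ ^ 2) ≤ (inner ℂ (X v) v : ℂ).re ∧
      (inner ℂ (X v) v : ℂ).re ≤ (‖C‖ + c / 2) * (t * ‖v‖ ^ 2) := by
  have hdev : |t⁻¹ * (inner ℂ (X v) v : ℂ).re - (inner ℂ (C v) v : ℂ).re| ≤ c / 2 * ‖v‖ ^ 2 := by
    have := abs_re_inner_apply_self_le (t⁻¹ • X - C) v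
    rw [sub_apply, inner_sub_left, Complex.sub_re, re_inner_smul_apply_self] at this
    exact this.trans (by gcongr)
  have hCle := (le_abs_self _).trans (abs_re_inner_apply_self_le C v)
  rcases ht.eq_or_lt with rfl | ht
  · -- `t = 0` forces `|⟨C v, v⟩| ≤ c/2 ‖v‖²`, which contradicts positivity unless `v = 0`.
    have hv : v = 0 := by
      rw [inv_zero, zero_mul, zero_sub, abs_neg] at hdev
      have hc : 0 < c := by linarith [(norm_nonneg _).trans_lt hX]
      have : ‖v‖ ^ 2 ≤ 0 := by nlinarith [hC v, (le_abs_self _).trans hdev]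
      simpa using this
    simp [hv]
  · rw [abs_le] at hdev
    have hval : (inner ℂ (X v) v : ℂ).re = t * (t⁻¹ * (inner ℂ (X v) v : ℂ).re) := by
      field_simp
    rw [hval]
    constructor <;> nlinarith [hC v]

theorem StrictlyPos.exists_re_inner_apply_self_bounds_of_tendsto [CompleteSpace E]
    {X : ℕ → E →L[ℂ] E} {t : ℕ → ℝ} {C : E →L[ℂ] E} (hC : StrictlyPos C) (ht : ∀ n, 0 ≤ t n)
    (hlim : Tendsto (fun n => ‖(t n)⁻¹ • X n - C‖) atTop (nhds 0)) :
    ∃ N : ℕ, ∃ c₁ > (0 : ℝ), ∃ c₂ > (0 : ℝ), ∀ n ≥ N, ∀ v : E,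
      c₁ * (t n * ‖v‖ ^ 2) ≤ (inner ℂ (X n v) v : ℂ).re ∧
        (inner ℂ (X n v) v : ℂ).re ≤ c₂ * (t n * ‖v‖ ^ 2) := by
  obtain ⟨c, hc, hCc⟩ := hC
  obtain ⟨N, hN⟩ := eventually_atTop.mp (hlim.eventually (gt_mem_nhds (half_pos hc)))
  exact ⟨N, c / 2, half_pos hc, ‖C‖ + c / 2, by positivity, fun n hn v =>
    re_inner_apply_self_bounds_of_norm_inv_smul_sub_lt hCc (ht n) (hN n hn) v⟩

end QuadraticForm

omit [CompleteSpace H] in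
theorem blk_pr (A B C D : H →L[ℂ] H) (x y : H) :
    blk A B C D (pr x y) = pr (A x + B y) (C x + D y) := rfl

omit [CompleteSpace H] in
theorem inner_pr_pr (x y x' y' : H) :
    (inner ℂ (pr x y) (pr x' y') : ℂ) = inner ℂ x x' + inner ℂ y y' :=
  WithLp.prod_inner_apply _ _

omit [CompleteSpace H] in
theorem norm_pr_sq (x y : H) : ‖pr x y‖ ^ 2 = ‖x‖ ^ 2 + ‖y‖ ^ 2 :=
  WithLp.prod_norm_sq_eq_of_L2 _

theorem eq_adjoint_apply_of_adjoint_apply_eq {A A' : H →L[ℂ] H} (hA : A ∘L A' = 1) {p w : H}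
    (h : adjoint A p = w) : p = adjoint A' w := by
  rw [← h, ← comp_apply, ← adjoint_comp, hA, ← star_eq_adjoint, star_one, one_apply_eq_self]

theorem re_inner_sym_blk_eq_of_adjoint_apply_eq {A A' B T α₀ α₁ : H →L[ℂ] H}
    (hA : A ∘L A' = 1) (hT : IsSelfAdjoint T) {p q r : H} (h : adjoint A p = T q - B r) :
    (inner ℂ (sym (blk (α₀ ∘L adjoint A) (-(α₀ ∘L T)) 0 (α₁ ∘L adjoint B)) (pr p q))
        (pr p q) : ℂ).re =
      (inner ℂ (sym (blk (α₁ ∘L adjoint B) (-(T ∘L A' ∘L α₀ ∘L B)) 0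
        (adjoint B ∘L A' ∘L α₀ ∘L B)) (pr q r)) (pr q r) : ℂ).re := by
  have hp := eq_adjoint_apply_of_adjoint_apply_eq hA h
  have hfirst : (α₀ ∘L adjoint A) p + (-(α₀ ∘L T)) q = -α₀ (B r) := by
    simp only [comp_apply, neg_apply, h, map_sub]
    abel
  have hTsymm : ∀ x y : H, inner ℂ (T x) y = inner ℂ x (T y) := hT.isSymmetric
  rw [re_inner_sym_apply_self, re_inner_sym_apply_self, blk_pr, blk_pr, inner_pr_pr,
    inner_pr_pr, hfirst]
  conv_lhs => rw [hp, adjoint_inner_right]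
  simp only [comp_apply, neg_apply, zero_apply, zero_add, map_neg, inner_neg_left,
    inner_sub_right, adjoint_inner_left, inner_add_left, hTsymm]
  congr 1
  ring

theorem commS_succ_eq {a b a' al : ℕ → H →L[ℂ] H} {lam : ℝ} {u : ℕ → H} {n : ℕ}
    (hinv : a n ∘L a' n = 1) (hb : IsSelfAdjoint (b (n + 1))) (hu : GenEigRec a b (lam : ℂ) u) :
    commS a b al lam u (n + 1) =
      (inner ℂ (climOp a a' b al lam (n + 1) (pr (u (n + 1)) (u (n + 2))))
        (pr (u (n + 1)) (u (n + 2))) : ℂ).re := by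
  have hT : IsSelfAdjoint ((lam : ℂ) • (1 : H →L[ℂ] H) - b (n + 1)) :=
    (IsSelfAdjoint.smul (Complex.conj_ofReal lam) (IsSelfAdjoint.one _)).sub hb
  refine re_inner_sym_blk_eq_of_adjoint_apply_eq hinv hT ?_
  rw [sub_apply, smul_apply, one_apply_eq_self, ← hu n]
  abel

/-- Proposition `prop:1`. -/
theorem statement13 (a b a' al : ℕ → H →L[ℂ] H)
    (hinv : ∀ n, Inverts (a n) (a' n)) (hb : ∀ n, IsSelfAdjoint (b n))
    (lam : ℝ)
    (hCl : ∃ Cl : H2 H →L[ℂ] H2 H,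
      Tendsto (fun n => ‖(‖al n ∘L adjoint (a n)‖⁻¹ : ℝ) • climOp a a' b al lam n - Cl‖)
        atTop (nhds 0) ∧ StrictlyPos Cl) :
    ∃ N₀ : ℕ, ∃ c₁ > (0 : ℝ), ∃ c₂ > (0 : ℝ),
      ∀ α : H2 H, α ≠ 0 → ∀ u : ℕ → H, GenEigRec a b (lam : ℂ) u → pr (u 0) (u 1) = α →
        ∀ n : ℕ, N₀ ≤ n →
          c₁ * (‖al n ∘L adjoint (a n)‖ * (‖u n‖ ^ 2 + ‖u (n + 1)‖ ^ 2)) ≤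
            commS a b al lam u n ∧
          commS a b al lam u n ≤
            c₂ * (‖al n ∘L adjoint (a n)‖ * (‖u n‖ ^ 2 + ‖u (n + 1)‖ ^ 2)) := by
  obtain ⟨Cl, hlim, hpos⟩ := hCl
  obtain ⟨N, c₁, hc₁, c₂, hc₂, hbounds⟩ :=
    hpos.exists_re_inner_apply_self_bounds_of_tendsto (fun _ => norm_nonneg _) hlim
  refine ⟨N + 1, c₁, hc₁, c₂, hc₂, fun _ _ u hu _ n hn => ?_⟩
  obtain ⟨m, rfl⟩ := Nat.exists_eq_add_of_le' (Nat.one_le_of_lt hn)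
  rw [commS_succ_eq (hinv m).2 (hb (m + 1)) hu, ← norm_pr_sq]
  exact hbounds (m + 1) (by omega) _
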